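/- arXiv:2001.11496 — 2 statements merged into one kernel-verified Lean document; each statement's English description precedes it below -/
import Mathlib

section
/- Let n ≥ 2 and m = n − 1, and consider a connected tree graph on n nodes with m directed edges and the matrices K₀, K_L ∈ ℝ^{n×m}, Γ₁ ∈ ℝ^{m×n}, Γ₂ ∈ ℝ^{m×m} defined as in the context. Fix a node r and an edge i; let Γ₁′ ∈ ℝ^{m×m} be Γ₁ with the column of node r deleted, and let Γ₂′ ∈ ℝ^{(m−1)×m} be Γ₂ with row i deleted. Then the square (n + 2m − 1)×(n + 2m − 1) block matrix M_x‴ = [[0, K₀, K_L], [Γ₁′, 0, 0], [0, Γ₂′, Γ₂′]] is nonsingular. -/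
open Matrix

/-- A connected, tree-structured natural gas pipeline network with `n` nodes and
`m` directed edges (lines).  Each edge `e` is directed from its tail node
`tail e` to its head node `head e`.  Distinct edges connect distinct unordered
pairs of nodes, and the underlying undirected simple graph is a (connected) tree. -/
structure TreeNetwork (n m : ℕ) where
  tail : Fin m → Fin n
  head : Fin m → Fin n
  tail_ne_head : ∀ e, tail e ≠ head e
  edge_injective : Function.Injective fun e => s(tail e, head e)
  isTree : (SimpleGraph.fromEdgeSet (Set.range fun e => s(tail e, head e))).IsTree

namespace TreeNetwork

variable {n m : ℕ}

/-- The signed incidence matrix `E ∈ ℝ^{m×n}`: row `e` has `+1` at the tail node of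
edge `e`, `-1` at the head node, and zeros elsewhere. -/
def Emat (T : TreeNetwork n m) : Matrix (Fin m) (Fin n) ℝ :=
  Matrix.of fun e v => if v = T.tail e then (1 : ℝ) else if v = T.head e then -1 else 0

/-- `K₀ ∈ ℝ^{n×m}`: `K₀(i,j) = A j` if edge `j` leaves node `i`, and `0` otherwise. -/
def K0 (T : TreeNetwork n m) (A : Fin m → ℝ) : Matrix (Fin n) (Fin m) ℝ :=
  Matrix.of fun i j => if T.tail j = i then A j else 0

/-- `K_L ∈ ℝ^{n×m}`: `K_L(i,j) = -A j` if edge `j` enters node `i`, and `0` otherwise. -/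
def KL (T : TreeNetwork n m) (A : Fin m → ℝ) : Matrix (Fin n) (Fin m) ℝ :=
  Matrix.of fun i j => if T.head j = i then -A j else 0

/-- The entrywise absolute value `|E|` of the signed incidence matrix. -/
def EmatAbs (T : TreeNetwork n m) : Matrix (Fin m) (Fin n) ℝ :=
  Matrix.of fun e v => |T.Emat e v|

/-- `K̄₀ = (|E|ᵀ + Eᵀ)/2 ∈ ℝ^{n×m}`. -/
noncomputable def Kbar0 (T : TreeNetwork n m) : Matrix (Fin n) (Fin m) ℝ :=
  (2 : ℝ)⁻¹ • (T.EmatAbsᵀ + T.Ematᵀ)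

/-- `K̄_l = (Eᵀ - |E|ᵀ)/2 ∈ ℝ^{n×m}`. -/
noncomputable def Kbarl (T : TreeNetwork n m) : Matrix (Fin n) (Fin m) ℝ :=
  (2 : ℝ)⁻¹ • (T.Ematᵀ - T.EmatAbsᵀ)

/-- `Γ₁ = diag(l/2) ⬝ (K̄₀ᵀ diag(α) − K̄_lᵀ) ∈ ℝ^{m×n}`. -/
noncomputable def Gamma1 (T : TreeNetwork n m) (l : Fin m → ℝ) (α : Fin n → ℝ) :
    Matrix (Fin m) (Fin n) ℝ :=
  Matrix.diagonal (fun e => l e / 2) * (T.Kbar0ᵀ * Matrix.diagonal α - T.Kbarlᵀ)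

/-- `Γ₂ = diag(l/2) ∈ ℝ^{m×m}`. -/
noncomputable def Gamma2 (l : Fin m → ℝ) : Matrix (Fin m) (Fin m) ℝ :=
  Matrix.diagonal fun e => l e / 2

/-- The mass matrix `M_x = [[0, K₀, K_L], [Γ₁, 0, 0], [0, Γ₂, Γ₂]]`, whose first `n`
rows are the flux-conservation equations, next `m` rows the mass-continuity
equations, and last `m` rows the momentum equations; the first `n` columns
correspond to the density states, the next `m` to `φ₀`, the last `m` to `φ_l`. -/
noncomputable def Mx (T : TreeNetwork n m) (A l : Fin m → ℝ) (α : Fin n → ℝ) :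
    Matrix (Fin n ⊕ (Fin m ⊕ Fin m)) (Fin n ⊕ (Fin m ⊕ Fin m)) ℝ :=
  Matrix.fromBlocks 0 (Matrix.fromCols (T.K0 A) (T.KL A))
    (Matrix.fromRows (T.Gamma1 l α) 0)
    (Matrix.fromBlocks 0 0 (Gamma2 l) (Gamma2 l))

end TreeNetwork

namespace TreeNetwork

/-- The matrix `M_x‴` of Theorem 5: the mass matrix with the density column of node
`r` deleted (from `Γ₁`) and the momentum row of edge `i` deleted (from both `Γ₂`
blocks). -/
noncomputable def Mxppp {n m : ℕ} (T : TreeNetwork n m) (A l : Fin m → ℝ)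
    (α : Fin n → ℝ) (r : Fin n) (i : Fin m) :
    Matrix (Fin n ⊕ (Fin m ⊕ {e : Fin m // e ≠ i}))
      ({v : Fin n // v ≠ r} ⊕ (Fin m ⊕ Fin m)) ℝ :=
  Matrix.fromBlocks 0
    (Matrix.fromCols (T.K0 A) (T.KL A))
    (Matrix.fromRows ((T.Gamma1 l α).submatrix id Subtype.val) 0)
    (Matrix.fromBlocks 0 0
      ((Gamma2 l).submatrix (Subtype.val : {e : Fin m // e ≠ i} → Fin m) id)
      ((Gamma2 l).submatrix (Subtype.val : {e : Fin m // e ≠ i} → Fin m) id))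

end TreeNetwork


section AuxTree

open SimpleGraph

variable {V : Type*} [DecidableEq V] {G : SimpleGraph V}

lemma aux_dist_ne (hG : G.IsTree) {t h : V} (hadj : G.Adj t h) (r0 : V) :
    G.dist r0 t ≠ G.dist r0 h := by
  obtain ⟨p, hp, hlp⟩ := hG.isConnected.exists_path_of_dist r0 t
  obtain ⟨q, hq, hlq⟩ := hG.isConnected.exists_path_of_dist r0 h
  intro heq
  have hth : G.dist t h = 1 := SimpleGraph.dist_eq_one_iff_adj.2 hadj
  have htq : t ∉ q.support := by
    intro ht
    have h1 : G.dist r0 t ≤ (q.takeUntil t ht).length := SimpleGraph.dist_le _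
    have h2 : G.dist t h ≤ (q.dropUntil t ht).length := SimpleGraph.dist_le _
    have h3 : (q.takeUntil t ht).length + (q.dropUntil t ht).length = q.length := by
      rw [← SimpleGraph.Walk.length_append, SimpleGraph.Walk.take_spec]
    omega
  have hcp : (q.concat hadj.symm).IsPath := by
    rw [← SimpleGraph.Walk.isPath_reverse_iff, SimpleGraph.Walk.reverse_concat]
    exact hq.reverse.cons (by simpa using htq)
  have hpq := (hG.existsUnique_path r0 t).unique hp hcp
  have hlen := congrArg SimpleGraph.Walk.length hpq
  rw [SimpleGraph.Walk.length_concat] at hlen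
  omega

lemma aux_parity (hG : G.IsTree) {t h : V} (hadj : G.Adj t h) (r0 : V) :
    Even (G.dist r0 h) ↔ ¬ Even (G.dist r0 t) := by
  have h1 : G.dist r0 h ≤ G.dist r0 t + 1 := by
    have := hG.isConnected.dist_triangle (u := r0) (v := t) (w := h)
    rwa [SimpleGraph.dist_eq_one_iff_adj.2 hadj] at this
  have h2 : G.dist r0 t ≤ G.dist r0 h + 1 := by
    have := hG.isConnected.dist_triangle (u := r0) (v := h) (w := t)
    rwa [SimpleGraph.dist_eq_one_iff_adj.2 hadj.symm] at this
  have h3 := aux_dist_ne hG hadj r0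
  have h4 : G.dist r0 h = G.dist r0 t + 1 ∨ G.dist r0 t = G.dist r0 h + 1 := by omega
  rcases h4 with h4 | h4 <;> rw [h4] <;> simp [Nat.even_add_one]

end AuxTree

namespace TreeNetwork

variable {n m : ℕ}

/-- The underlying simple graph of the network. -/
def graph (T : TreeNetwork n m) : SimpleGraph (Fin n) :=
  SimpleGraph.fromEdgeSet (Set.range fun e => s(T.tail e, T.head e))

lemma isTree' (T : TreeNetwork n m) : T.graph.IsTree := T.isTree

lemma adj_of_edge (T : TreeNetwork n m) (e : Fin m) :
    T.graph.Adj (T.tail e) (T.head e) := by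
  rw [graph, SimpleGraph.fromEdgeSet_adj]
  exact ⟨⟨e, rfl⟩, T.tail_ne_head e⟩

lemma adj_iff (T : TreeNetwork n m) {v w : Fin n} :
    T.graph.Adj v w ↔
      ∃ e, (T.tail e = v ∧ T.head e = w) ∨ (T.tail e = w ∧ T.head e = v) := by
  rw [graph, SimpleGraph.fromEdgeSet_adj]
  constructor
  · rintro ⟨⟨e, he⟩, -⟩
    rw [Sym2.eq_iff] at he
    exact ⟨e, he⟩
  · rintro ⟨e, (⟨h1, h2⟩ | ⟨h1, h2⟩)⟩
    · subst h1; subst h2; exact ⟨⟨e, rfl⟩, T.tail_ne_head e⟩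
    · subst h1; subst h2
      exact ⟨⟨e, Sym2.eq_swap⟩, (T.tail_ne_head e).symm⟩

lemma rho_zero (T : TreeNetwork n m) (α : Fin n → ℝ) (hα : ∀ v, α v ≠ 0)
    (ρ : Fin n → ℝ) (r : Fin n) (hr : ρ r = 0)
    (hedge : ∀ e, α (T.tail e) * ρ (T.tail e) + ρ (T.head e) = 0) :
    ∀ v, ρ v = 0 := by
  have step : ∀ u v : Fin n, T.graph.Adj u v → ρ u = 0 → ρ v = 0 := by
    intro u v huv hu
    rcases T.adj_iff.1 huv with ⟨e, ⟨h1, h2⟩ | ⟨h1, h2⟩⟩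
    · have h := hedge e; rw [h1, h2, hu, mul_zero, zero_add] at h; exact h
    · have h := hedge e; rw [h1, h2, hu, add_zero] at h
      exact (mul_eq_zero.1 h).resolve_left (hα _)
  have key : ∀ (u v : Fin n) (p : T.graph.Walk u v), ρ u = 0 → ρ v = 0 := by
    intro u v p
    induction p with
    | nil => exact id
    | cons hab p ih => intro ha; exact ih (step _ _ hab ha)
  intro v
  obtain ⟨p⟩ := T.isTree'.isConnected.preconnected r v
  exact key _ _ p hr

lemma cut (T : TreeNetwork n m) (e : Fin m) :
    ∃ S : Finset (Fin n), T.head e ∈ S ∧ T.tail e ∉ S ∧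
      ∀ j, j ≠ e → (T.tail j ∈ S ↔ T.head j ∈ S) := by
  classical
  set G' := T.graph.deleteEdges {s(T.tail e, T.head e)} with hG'
  refine ⟨Finset.univ.filter (fun v => G'.Reachable (T.head e) v), ?_, ?_, ?_⟩
  · simp only [Finset.mem_filter, Finset.mem_univ, true_and]
    exact SimpleGraph.Reachable.refl _
  · simp only [Finset.mem_filter, Finset.mem_univ, true_and]
    intro hreach
    obtain ⟨w⟩ := hreach
    have hwp := w.bypass_isPath
    set p := (w.bypass.mapLe (SimpleGraph.deleteEdges_le (G := T.graph)
      (s := {s(T.tail e, T.head e)}))) with hpdef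
    have hpp : p.IsPath :=
      SimpleGraph.Walk.map_isPath_of_injective (fun a b hab => hab) hwp
    have hedges : s(T.tail e, T.head e) ∉ p.edges := by
      intro hmem
      have hpe : p.edges = w.bypass.edges := by
        rw [hpdef]
        show (SimpleGraph.Walk.map _ w.bypass).edges = _
        rw [SimpleGraph.Walk.edges_map]
        have hid : List.map (Sym2.map id) w.bypass.edges = w.bypass.edges := by
          rw [Sym2.map_id, List.map_id]
        exact hid
      rw [hpe] at hmem
      have hsub := w.bypass.edges_subset_edgeSet hmem
      rw [SimpleGraph.edgeSet_deleteEdges] at hsub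
      exact hsub.2 rfl
    have hcyc := SimpleGraph.Path.cons_isCycle ⟨p, hpp⟩ (T.adj_of_edge e) hedges
    exact T.isTree'.IsAcyclic _ hcyc
  · intro j hj
    simp only [Finset.mem_filter, Finset.mem_univ, true_and]
    have hadj : G'.Adj (T.tail j) (T.head j) := by
      rw [hG', SimpleGraph.deleteEdges_adj]
      refine ⟨T.adj_of_edge j, ?_⟩
      simp only [Set.mem_singleton_iff]
      intro hcontra
      exact hj (T.edge_injective hcontra)
    exact ⟨fun h' => h'.trans hadj.reachable, fun h' => h'.trans hadj.symm.reachable⟩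

lemma exists_sign (T : TreeNetwork n m) (r0 : Fin n) :
    ∃ σ : Fin n → ℝ, (∀ v, σ v = 1 ∨ σ v = -1) ∧
      ∀ e, σ (T.head e) = - σ (T.tail e) := by
  classical
  refine ⟨fun v => if Even (T.graph.dist r0 v) then 1 else -1, fun v => by
    by_cases h : Even (T.graph.dist r0 v) <;> simp [h], ?_⟩
  intro e
  have hpar := aux_parity T.isTree' (T.adj_of_edge e) r0
  dsimp only
  by_cases h : Even (T.graph.dist r0 (T.tail e))
  · have h2 : ¬ Even (T.graph.dist r0 (T.head e)) := by
      rw [hpar]; simp [h]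
    rw [if_pos h, if_neg h2]
  · have h2 : Even (T.graph.dist r0 (T.head e)) := hpar.2 h
    rw [if_pos h2, if_neg h, neg_neg]

lemma flow_zero (T : TreeNetwork n m) (r0 : Fin n) (a b : Fin m → ℝ) (i : Fin m)
    (hnode : ∀ v : Fin n,
      (∑ j, ((if T.tail j = v then a j else 0) - (if T.head j = v then b j else 0))) = 0)
    (hb : ∀ j, j ≠ i → b j = - a j) :
    (∀ j, a j = 0) ∧ b i = 0 := by
  classical
  obtain ⟨σ, hσ1, hσ2⟩ := T.exists_sign r0
  have hσ0 : ∀ v, σ v ≠ 0 := fun v => by rcases hσ1 v with h | h <;> rw [h] <;> norm_num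
  have key : ∀ S : Finset (Fin n),
      ∑ j, ((if T.tail j ∈ S then σ (T.tail j) * a j else 0)
        - (if T.head j ∈ S then σ (T.head j) * b j else 0)) = 0 := by
    intro S
    have h0 : ∑ v ∈ S, σ v * (∑ j, ((if T.tail j = v then a j else 0)
        - (if T.head j = v then b j else 0))) = 0 := by
      simp [hnode]
    calc ∑ j, ((if T.tail j ∈ S then σ (T.tail j) * a j else 0)
          - (if T.head j ∈ S then σ (T.head j) * b j else 0))
        = ∑ j, ((∑ v ∈ S, if T.tail j = v then σ v * a j else 0)
            - (∑ v ∈ S, if T.head j = v then σ v * b j else 0)) := by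
          refine Finset.sum_congr rfl fun j _ => ?_
          rw [Finset.sum_ite_eq, Finset.sum_ite_eq]
      _ = ∑ j, ∑ v ∈ S, ((if T.tail j = v then σ v * a j else 0)
            - (if T.head j = v then σ v * b j else 0)) := by
          refine Finset.sum_congr rfl fun j _ => ?_
          rw [Finset.sum_sub_distrib]
      _ = ∑ v ∈ S, ∑ j, ((if T.tail j = v then σ v * a j else 0)
            - (if T.head j = v then σ v * b j else 0)) := Finset.sum_comm
      _ = ∑ v ∈ S, σ v * (∑ j, ((if T.tail j = v then a j else 0)
            - (if T.head j = v then b j else 0))) := by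
          refine Finset.sum_congr rfl fun v _ => ?_
          rw [Finset.mul_sum]
          refine Finset.sum_congr rfl fun j _ => ?_
          by_cases h1 : T.tail j = v <;> by_cases h2 : T.head j = v <;>
            simp [h1, h2] <;> ring
      _ = 0 := h0
  have huniv := key Finset.univ
  simp only [Finset.mem_univ, if_true] at huniv
  have hbi : b i = - a i := by
    have hsingle : ∑ j, (σ (T.tail j) * a j - σ (T.head j) * b j)
        = σ (T.tail i) * a i - σ (T.head i) * b i := by
      apply Finset.sum_eq_single
      · intro j _ hj
        rw [hb j hj, hσ2 j]; ring
      · intro h; exact absurd (Finset.mem_univ i) h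
    rw [hsingle, hσ2 i] at huniv
    have h2 : σ (T.tail i) * (a i + b i) = 0 := by linear_combination huniv
    have h3 := (mul_eq_zero.1 h2).resolve_left (hσ0 _)
    linarith
  have hb' : ∀ j, b j = - a j := by
    intro j
    by_cases hj : j = i
    · rw [hj]; exact hbi
    · exact hb j hj
  have ha : ∀ e, a e = 0 := by
    intro e
    obtain ⟨S, hS1, hS2, hS3⟩ := T.cut e
    have hk := key S
    have hk2eq : ∑ j, ((if T.tail j ∈ S then σ (T.tail j) * a j else 0)
        + (if T.head j ∈ S then σ (T.head j) * a j else 0))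
        = ∑ j, ((if T.tail j ∈ S then σ (T.tail j) * a j else 0)
          - (if T.head j ∈ S then σ (T.head j) * b j else 0)) := by
      apply Finset.sum_congr rfl
      intro j _
      rw [hb' j]
      by_cases h1 : T.tail j ∈ S <;> by_cases h2 : T.head j ∈ S <;>
        simp [h1, h2] <;> ring
    have hk2 : ∑ j, ((if T.tail j ∈ S then σ (T.tail j) * a j else 0)
        + (if T.head j ∈ S then σ (T.head j) * a j else 0)) = 0 := by
      rw [hk2eq]; exact hk
    have hsingle : ∑ j, ((if T.tail j ∈ S then σ (T.tail j) * a j else 0)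
        + (if T.head j ∈ S then σ (T.head j) * a j else 0)) = σ (T.head e) * a e := by
      rw [Finset.sum_eq_single e]
      · rw [if_neg hS2, if_pos hS1, zero_add]
      · intro j _ hj
        by_cases h1 : T.tail j ∈ S
        · rw [if_pos h1, if_pos ((hS3 j hj).1 h1), hσ2 j]; ring
        · rw [if_neg h1, if_neg (fun h => h1 ((hS3 j hj).2 h)), add_zero]
      · intro h; exact absurd (Finset.mem_univ e) h
    rw [hsingle] at hk2
    exact (mul_eq_zero.1 hk2).resolve_left (hσ0 _)
  refine ⟨ha, ?_⟩
  rw [hbi, ha i, neg_zero]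

lemma Gamma1_apply (T : TreeNetwork n m) (l : Fin m → ℝ) (α : Fin n → ℝ)
    (e : Fin m) (v : Fin n) :
    T.Gamma1 l α e v
      = (l e / 2) * ((if v = T.tail e then α v else 0) + (if v = T.head e then 1 else 0)) := by
  classical
  have hne := T.tail_ne_head e
  show (Matrix.diagonal (fun e => l e / 2) * (T.Kbar0ᵀ * Matrix.diagonal α - T.Kbarlᵀ)) e v = _
  rw [Matrix.diagonal_mul, Matrix.sub_apply, Matrix.mul_diagonal, Matrix.transpose_apply,
    Matrix.transpose_apply]
  have h0 : T.Kbar0 v e = if v = T.tail e then 1 else 0 := by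
    simp only [Kbar0, Matrix.smul_apply, Matrix.add_apply, Matrix.transpose_apply, EmatAbs,
      Emat, Matrix.of_apply, smul_eq_mul]
    by_cases h1 : v = T.tail e
    · simp [h1]; norm_num
    · by_cases h2 : v = T.head e <;> simp [h1, h2, hne, Ne.symm hne] <;> norm_num
  have hl0 : T.Kbarl v e = if v = T.head e then -1 else 0 := by
    simp only [Kbarl, Matrix.smul_apply, Matrix.sub_apply, Matrix.transpose_apply, EmatAbs,
      Emat, Matrix.of_apply, smul_eq_mul]
    by_cases h1 : v = T.tail e
    · have h2 : ¬ v = T.head e := fun h => hne (h1 ▸ h)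
      simp [h1, h2, hne, Ne.symm hne]
    · by_cases h2 : v = T.head e <;> simp [h1, h2, hne, Ne.symm hne] <;> norm_num
  rw [h0, hl0]
  by_cases h1 : v = T.tail e
  · have h2 : ¬ v = T.head e := fun h => hne (h1 ▸ h)
    simp only [if_pos h1, if_neg h2]; ring
  · by_cases h2 : v = T.head e
    · simp only [if_neg h1, if_pos h2]; ring
    · simp only [if_neg h1, if_neg h2]; ring

end TreeNetwork

/-- The square `(n+2m−1) × (n+2m−1)` matrix
`M_x‴ = [[0, K₀, K_L], [Γ₁′, 0, 0], [0, Γ₂′, Γ₂′]]`, obtained from the mass matrix by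
deleting the density column of node `r` and the momentum row of edge `i`, is
nonsingular: under any bijection of its row and column index sets its determinant is
nonzero. -/
theorem Mxppp_nonsingular (n m : ℕ) (hn : 2 ≤ n) (hm : m = n - 1)
    (T : TreeNetwork n m) (A l : Fin m → ℝ) (α : Fin n → ℝ)
    (hA : ∀ j, 0 < A j) (hl : ∀ e, 0 < l e) (hα : ∀ i, 0 < α i)
    (r : Fin n) (i : Fin m)
    (σ : (Fin n ⊕ (Fin m ⊕ {e : Fin m // e ≠ i})) ≃
         ({v : Fin n // v ≠ r} ⊕ (Fin m ⊕ Fin m))) :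
    ((T.Mxppp A l α r i).submatrix id σ).det ≠ 0 := by
  classical
  intro hdet
  obtain ⟨x, hx0, hxv⟩ := Matrix.exists_mulVec_eq_zero_iff.2 hdet
  set ρ' : {v : Fin n // v ≠ r} → ℝ := fun v => (x ∘ σ.symm) (Sum.inl v) with hρ'
  set φ0 : Fin m → ℝ := fun j => (x ∘ σ.symm) (Sum.inr (Sum.inl j)) with hφ0
  set φl : Fin m → ℝ := fun j => (x ∘ σ.symm) (Sum.inr (Sum.inr j)) with hφl
  have hy : x ∘ σ.symm = Sum.elim ρ' (Sum.elim φ0 φl) := by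
    funext u
    rcases u with v | (j | j) <;> rfl
  have hyv : (T.Mxppp A l α r i) *ᵥ (Sum.elim ρ' (Sum.elim φ0 φl)) = 0 := by
    rw [← hy]
    have hsub := Matrix.submatrix_mulVec_equiv (T.Mxppp A l α r i) x (id) σ
    rw [hxv] at hsub
    funext u
    exact (congrFun hsub.symm u)
  rw [TreeNetwork.Mxppp, Matrix.fromBlocks_mulVec] at hyv
  -- Row equations
  have eqTop : ∀ v : Fin n,
      (T.K0 A *ᵥ φ0) v + (T.KL A *ᵥ φl) v = 0 := by
    intro v
    have h := congrFun hyv (Sum.inl v)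
    simpa [Matrix.fromCols_mulVec_sumElim, Matrix.zero_mulVec] using h
  have eqMid : ∀ e : Fin m,
      (((T.Gamma1 l α).submatrix id Subtype.val) *ᵥ ρ') e = 0 := by
    intro e
    have h := congrFun hyv (Sum.inr (Sum.inl e))
    simpa [Matrix.fromRows_mulVec, Matrix.fromBlocks_mulVec, Matrix.zero_mulVec] using h
  have eqBot : ∀ e : {e : Fin m // e ≠ i},
      (l e.val / 2) * φ0 e.val + (l e.val / 2) * φl e.val = 0 := by
    intro e
    have h := congrFun hyv (Sum.inr (Sum.inr e))
    simp only [Matrix.fromRows_mulVec, Matrix.fromBlocks_mulVec,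
      Matrix.zero_mulVec, Sum.elim_inr, Pi.add_apply, Pi.zero_apply] at h
    have h1 : ∀ w : Fin m → ℝ,
        (((TreeNetwork.Gamma2 l).submatrix (Subtype.val : {e : Fin m // e ≠ i} → Fin m) id) *ᵥ w) e
          = (l e.val / 2) * w e.val := by
      intro w
      show ((TreeNetwork.Gamma2 l) *ᵥ w) e.val = _
      rw [TreeNetwork.Gamma2, Matrix.mulVec_diagonal]
    rw [h1, h1] at h
    simp only [Function.comp_apply, Sum.elim_inl, Sum.elim_inr] at h
    linarith [h]
  -- the momentum relations
  have hφ : ∀ j, j ≠ i → φl j = - φ0 j := by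
    intro j hj
    have h := eqBot ⟨j, hj⟩
    have hlj := hl j
    have h2 : (l j / 2) * (φ0 j + φl j) = 0 := by linear_combination h
    have h3 := (mul_eq_zero.1 h2).resolve_left (by positivity)
    linarith
  -- the density part
  set ρ : Fin n → ℝ := fun v => if h : v = r then 0 else ρ' ⟨v, h⟩ with hρdef
  have hρr : ρ r = 0 := by simp [hρdef]
  have hρval : ∀ w : {v : Fin n // v ≠ r}, ρ w.val = ρ' w := by
    intro w
    simp [hρdef, w.prop]
  have hedge : ∀ e, α (T.tail e) * ρ (T.tail e) + ρ (T.head e) = 0 := by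
    intro e
    have h := eqMid e
    have hsum : ∑ v : Fin n, T.Gamma1 l α e v * ρ v = 0 := by
      have h1 : ∑ w : {v : Fin n // v ≠ r}, T.Gamma1 l α e w.val * ρ w.val = 0 := by
        have h2 : ∑ w : {v : Fin n // v ≠ r}, T.Gamma1 l α e w.val * ρ' w = 0 := by
          simpa [Matrix.mulVec, dotProduct] using h
        rw [← h2]
        exact Finset.sum_congr rfl fun w _ => by rw [hρval w]
      calc ∑ v : Fin n, T.Gamma1 l α e v * ρ v
          = ∑ v ∈ Finset.univ.erase r, T.Gamma1 l α e v * ρ v :=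
            (Finset.sum_erase Finset.univ
              (f := fun v => T.Gamma1 l α e v * ρ v)
              (by show T.Gamma1 l α e r * ρ r = 0; rw [hρr, mul_zero])).symm
        _ = ∑ w : {v : Fin n // v ≠ r}, T.Gamma1 l α e w.val * ρ w.val :=
            Finset.sum_subtype (p := fun v => v ≠ r) (Finset.univ.erase r)
              (fun x => by simp) (fun v => T.Gamma1 l α e v * ρ v)
        _ = 0 := h1
    have h3 : ∑ v : Fin n, T.Gamma1 l α e v * ρ v
        = (l e / 2) * (α (T.tail e) * ρ (T.tail e)) + (l e / 2) * ρ (T.head e) := by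
      calc ∑ v : Fin n, T.Gamma1 l α e v * ρ v
          = ∑ v : Fin n, ((if v = T.tail e then (l e / 2) * (α v * ρ v) else 0)
              + (if v = T.head e then (l e / 2) * ρ v else 0)) := by
            refine Finset.sum_congr rfl fun v _ => ?_
            rw [T.Gamma1_apply l α e v]
            by_cases h1 : v = T.tail e <;> by_cases h2 : v = T.head e <;>
              simp [h1, h2, T.tail_ne_head e, (T.tail_ne_head e).symm] <;> ring
        _ = (∑ v : Fin n, if v = T.tail e then (l e / 2) * (α v * ρ v) else 0)
              + (∑ v : Fin n, if v = T.head e then (l e / 2) * ρ v else 0) :=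
            Finset.sum_add_distrib
        _ = _ := by
            rw [Finset.sum_ite_eq' Finset.univ, Finset.sum_ite_eq' Finset.univ]
            simp
    rw [h3] at hsum
    have h2 : (l e / 2) * (α (T.tail e) * ρ (T.tail e) + ρ (T.head e)) = 0 := by
      linear_combination hsum
    exact (mul_eq_zero.1 h2).resolve_left (by have := hl e; positivity)
  have hρ0 : ∀ v, ρ v = 0 :=
    T.rho_zero α (fun v => ne_of_gt (hα v)) ρ r hρr hedge
  have hρ'0 : ∀ w, ρ' w = 0 := fun w => by rw [← hρval w, hρ0]
  -- the flow part
  have hnode : ∀ v : Fin n,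
      (∑ j, ((if T.tail j = v then A j * φ0 j else 0)
        - (if T.head j = v then A j * φl j else 0))) = 0 := by
    intro v
    have h := eqTop v
    simp only [Matrix.mulVec, dotProduct, TreeNetwork.K0, TreeNetwork.KL,
      Matrix.of_apply] at h
    calc ∑ j, ((if T.tail j = v then A j * φ0 j else 0)
          - (if T.head j = v then A j * φl j else 0))
        = ∑ j, ((if T.tail j = v then A j else 0) * φ0 j
            + (if T.head j = v then -A j else 0) * φl j) := by
          refine Finset.sum_congr rfl fun j _ => ?_
          by_cases h1 : T.tail j = v <;> by_cases h2 : T.head j = v <;>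
            simp [h1, h2] <;> ring
      _ = ∑ j, (if T.tail j = v then A j else 0) * φ0 j
            + ∑ j, (if T.head j = v then -A j else 0) * φl j := Finset.sum_add_distrib
      _ = 0 := h
  obtain ⟨ha, hbi⟩ := T.flow_zero r (fun j => A j * φ0 j) (fun j => A j * φl j) i hnode
    (fun j hj => by show A j * φl j = -(A j * φ0 j); rw [hφ j hj]; ring)
  have hφ00 : ∀ j, φ0 j = 0 := by
    intro j
    have := ha j
    exact (mul_eq_zero.1 this).resolve_left (ne_of_gt (hA j))
  have hφl0 : ∀ j, φl j = 0 := by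
    intro j
    by_cases hj : j = i
    · subst hj
      exact (mul_eq_zero.1 hbi).resolve_left (ne_of_gt (hA j))
    · rw [hφ j hj, hφ00, neg_zero]
  apply hx0
  funext u
  have hxu : x u = (x ∘ σ.symm) (σ u) := by simp
  rw [hxu, hy]
  rcases σ u with v | (j | j)
  · exact hρ'0 v
  · exact hφ00 j
  · exact hφl0 j
end

section
/- Let n ≥ 2 and m = n − 1, and consider a connected tree graph on n nodes with m directed edges, positive segment lengths l_e > 0, positive compressor ratios α_i > 0, and Γ₁ = diag(l/2)·(K̄₀ᵀ diag(α) − K̄_lᵀ) ∈ ℝ^{m×n} defined as in the context. Fix a node r (the balancing node). Then for every c ∈ ℝᵐ and every scalar s ∈ ℝ, there exists a unique vector w ∈ ℝⁿ with w_r = s and Γ₁ w = c. In particular, once the density derivative at the balancing node is specified, all density state derivatives of the network are uniquely determined by the mass-continuity equations Γ₁ ρ̇ = φ₀ − φ_l. -/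
open Matrix

namespace TreeNetwork

variable {n m : ℕ}

lemma gamma1_entry (T : TreeNetwork n m) (l : Fin m → ℝ) (α : Fin n → ℝ)
    (e : Fin m) (v : Fin n) :
    T.Gamma1 l α e v =
      (if T.tail e = v then l e / 2 * α v else 0) +
      (if T.head e = v then l e / 2 else 0) := by
  have hth := T.tail_ne_head e
  have h1 : T.Gamma1 l α e v = l e / 2 * (T.Kbar0ᵀ e v * α v - T.Kbarlᵀ e v) := by
    simp [Gamma1, Matrix.diagonal_mul, Matrix.mul_diagonal, Matrix.sub_apply]
  rw [h1]
  simp only [Matrix.transpose_apply, Kbar0, Kbarl, Matrix.smul_apply, Matrix.add_apply,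
    Matrix.sub_apply, Matrix.transpose_apply, EmatAbs, Emat, Matrix.of_apply, smul_eq_mul]
  rcases eq_or_ne (T.tail e) v with h|h <;> rcases eq_or_ne (T.head e) v with h2|h2
  · exact absurd (h.trans h2.symm) hth
  · simp [h, Ne.symm h2]; rw [if_neg h2]; ring
  · simp [h2, Ne.symm h]; rw [if_neg h]; ring
  · simp [Ne.symm h, Ne.symm h2]; rw [if_neg h, if_neg h2]; simp

lemma gamma1_mulVec (T : TreeNetwork n m) (l : Fin m → ℝ) (α : Fin n → ℝ)
    (w : Fin n → ℝ) (e : Fin m) :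
    (T.Gamma1 l α).mulVec w e =
      l e / 2 * (α (T.tail e) * w (T.tail e) + w (T.head e)) := by
  simp only [Matrix.mulVec, dotProduct, gamma1_entry, add_mul, ite_mul, zero_mul,
    Finset.sum_add_distrib, Finset.sum_ite_eq, Finset.mem_univ, if_true]
  ring

lemma ker_zero (T : TreeNetwork n m) (l : Fin m → ℝ) (α : Fin n → ℝ)
    (hl : ∀ e, 0 < l e) (hα : ∀ i, 0 < α i) (r : Fin n) (w : Fin n → ℝ)
    (hr : w r = 0) (h0 : (T.Gamma1 l α).mulVec w = 0) : w = 0 := by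
  have edge : ∀ e, α (T.tail e) * w (T.tail e) + w (T.head e) = 0 := by
    intro e
    have := congrFun h0 e
    rw [gamma1_mulVec] at this
    have hne : l e / 2 ≠ 0 := by have := hl e; positivity
    simpa [hne] using this
  have key : ∀ u v : Fin n,
      (SimpleGraph.fromEdgeSet (Set.range fun e => s(T.tail e, T.head e))).Walk u v →
      w u = 0 → w v = 0 := by
    intro u v p
    induction p with
    | nil => exact id
    | cons hadj p ih =>
      intro ha
      apply ih
      rw [SimpleGraph.fromEdgeSet_adj] at hadj
      obtain ⟨⟨e, he⟩, _⟩ := hadj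
      rw [Sym2.eq_iff] at he
      rcases he with ⟨h1, h2⟩ | ⟨h1, h2⟩
      · have := edge e
        rw [h1, h2, ha] at this
        linarith
      · have := edge e
        rw [h1, h2, ha] at this
        rw [add_zero] at this
        rcases mul_eq_zero.mp this with h | h
        · exact absurd h (hα _).ne'
        · exact h
  funext v
  obtain ⟨p⟩ := T.isTree.isConnected.preconnected r v
  exact key r v p hr

end TreeNetwork

/-- Theorem 6 of the paper. Fix a balancing node `r`. For every
flux-difference vector `c ∈ ℝᵐ` and every specified value `s` of the density
derivative at the balancing node, there is a unique vector `w ∈ ℝⁿ` of nodal density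
derivatives with `w r = s` satisfying the mass-continuity equations `Γ₁ w = c`. -/
theorem density_derivatives_unique_given_balancing_node
    (n m : ℕ) (hn : 2 ≤ n) (hm : m = n - 1)
    (T : TreeNetwork n m) (l : Fin m → ℝ) (α : Fin n → ℝ)
    (hl : ∀ e, 0 < l e) (hα : ∀ i, 0 < α i)
    (r : Fin n) (c : Fin m → ℝ) (s : ℝ) :
    ∃! w : Fin n → ℝ, w r = s ∧ (T.Gamma1 l α).mulVec w = c := by
  set L : (Fin n → ℝ) →ₗ[ℝ] ℝ × (Fin m → ℝ) :=
    (LinearMap.proj r).prod (Matrix.mulVecLin (T.Gamma1 l α)) with hL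
  have hinj : Function.Injective L := by
    intro w1 w2 h
    have h' : L (w1 - w2) = 0 := by rw [map_sub, h, sub_self]
    have h1 : (w1 - w2) r = 0 := congrArg Prod.fst h'
    have h2 : (T.Gamma1 l α).mulVec (w1 - w2) = 0 := congrArg Prod.snd h'
    have := TreeNetwork.ker_zero T l α hl hα r (w1 - w2) h1 h2
    exact sub_eq_zero.mp this
  have hfr : Module.finrank ℝ (Fin n → ℝ) = Module.finrank ℝ (ℝ × (Fin m → ℝ)) := by
    simp [Module.finrank_pi, Module.finrank_prod]
    omega
  have hsurj : Function.Surjective L :=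
    (LinearMap.injective_iff_surjective_of_finrank_eq_finrank hfr).mp hinj
  obtain ⟨w, hw⟩ := hsurj (s, c)
  have hw1 : w r = s := congrArg Prod.fst hw
  have hw2 : (T.Gamma1 l α).mulVec w = c := congrArg Prod.snd hw
  refine ⟨w, ⟨hw1, hw2⟩, fun y hy => hinj ?_⟩
  simp only [hL, LinearMap.prod_apply, Function.prod, LinearMap.proj_apply,
    Matrix.mulVecLin_apply]
  rw [hy.1, hy.2, hw1, hw2]
end
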